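/- arXiv:1007.4679 — 3 statements merged into one kernel-verified Lean document; each statement's English description precedes it below -/
import Mathlib

section
/- Let {b_j}_{j≥1} be a sequence of positive operators in B(H) such that the range projections satisfy R_{b_i} R_{b_j} = 0 whenever |i−j| > 1, each b_j is a sum of at most N projections, and the series Σ b_j converges strongly to b. Then b is a sum of 2N projections in B(H). -/
open scoped InnerProductSpace
open ContinuousLinearMap

variable {H : Type*} [NormedAddCommGroup H] [InnerProductSpace ℂ H] [CompleteSpace H]

/-- An (orthogonal) projection in `B(H)`: a self-adjoint idempotent. -/
def IsProjOp (p : H →L[ℂ] H) : Prop := IsSelfAdjoint p ∧ p * p = p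

/-- The range (support) projection of an operator: the orthogonal projection onto the
closure of its range. -/
noncomputable def rangeProjection (b : H →L[ℂ] H) : H →L[ℂ] H :=
  ((LinearMap.range (b : H →ₗ[ℂ] H)).topologicalClosure).subtypeL ∘L
    (Submodule.orthogonalProjectionOnto (LinearMap.range (b : H →ₗ[ℂ] H)).topologicalClosure)

/-- Murray–von Neumann subequivalence of projections. -/
def MvNSubequiv (p q : H →L[ℂ] H) : Prop :=
  ∃ v : H →L[ℂ] H, ContinuousLinearMap.adjoint v * v = p ∧ v * ContinuousLinearMap.adjoint v ≤ q

/-- Murray–von Neumann equivalence of projections. -/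
def MvNEquiv (p q : H →L[ℂ] H) : Prop :=
  ∃ v : H →L[ℂ] H, ContinuousLinearMap.adjoint v * v = p ∧ v * ContinuousLinearMap.adjoint v = q

/-- The trace of a (positive) operator computed along a Hilbert basis. -/
noncomputable def traceAlong {ι : Type*} (b : HilbertBasis ι ℂ H) (a : H →L[ℂ] H) : ℝ :=
  ∑' i, RCLike.re ⟪b i, a (b i)⟫_ℂ

/-!
Write each `b j` as a sum of exactly `N` projections `q j k` (padding with zeros). Since
`re ⟪x, b j x⟫ = ∑ k, ‖q j k x‖ ^ 2`, each `q j k` lies under the range projection of `b j`, so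
`q i k ⟂ q j k'` whenever `|i - j| > 1`. Hence for fixed `k` the projections `q (2m) k` are
pairwise orthogonal, and so are the `q (2m+1) k`. A strong sum of pairwise orthogonal projections
is again a projection, which gives projections `P k` and `Q k` with `B = ∑ k, (P k + Q k)`.
-/

theorem isStarProjection_sum_of_pairwise_mul_eq_zero {R ι : Type*} [NonUnitalNonAssocSemiring R]
    [StarRing R] {e : ι → R} (he : ∀ i, IsStarProjection (e i))
    (horth : Pairwise fun i j => e i * e j = 0) (s : Finset ι) :
    IsStarProjection (∑ i ∈ s, e i) := by
  classical
  induction s using Finset.induction_on with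
  | empty => simp
  | insert i s hi ih =>
    rw [Finset.sum_insert hi]
    refine (he i).add ih ?_
    rw [Finset.mul_sum]
    exact Finset.sum_eq_zero fun j hj => horth (ne_of_mem_of_not_mem hj hi).symm

section StrongSum

variable {𝕜 E ι : Type*} [RCLike 𝕜] [NormedAddCommGroup E] [InnerProductSpace 𝕜 E]
  [CompleteSpace E]

theorem IsStarProjection.norm_apply_sq {p : E →L[𝕜] E} (hp : IsStarProjection p) (x : E) :
    ‖p x‖ ^ 2 = RCLike.re ⟪x, p x⟫_𝕜 := by
  rw [← inner_self_eq_norm_sq (𝕜 := 𝕜), ← adjoint_inner_right p, ← star_eq_adjoint,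
    hp.isSelfAdjoint.star_eq, ← mul_apply_eq_comp, hp.isIdempotentElem.eq]

theorem IsStarProjection.norm_apply_le {p : E →L[𝕜] E} (hp : IsStarProjection p) (x : E) :
    ‖p x‖ ≤ ‖x‖ :=
  (p.le_opNorm x).trans (mul_le_of_le_one_left (norm_nonneg x) (IsStarProjection.norm_le p hp))

theorem re_inner_sum_apply_self {e : ι → E →L[𝕜] E} {s : Finset ι}
    (he : ∀ i ∈ s, IsStarProjection (e i)) (x : E) :
    RCLike.re ⟪x, (∑ i ∈ s, e i) x⟫_𝕜 = ∑ i ∈ s, ‖e i x‖ ^ 2 := by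
  rw [sum_apply, inner_sum, map_sum]
  exact Finset.sum_congr rfl fun i hi => ((he i hi).norm_apply_sq x).symm

theorem apply_eq_zero_of_sum_apply_eq_zero {e : ι → E →L[𝕜] E} {s : Finset ι}
    (he : ∀ i ∈ s, IsStarProjection (e i)) {x : E} (hx : (∑ i ∈ s, e i) x = 0) {i : ι}
    (hi : i ∈ s) : e i x = 0 := by
  have hsq : ∑ j ∈ s, ‖e j x‖ ^ 2 = 0 := by
    rw [← re_inner_sum_apply_self he, hx, inner_zero_right, map_zero]
  rw [Finset.sum_eq_zero_iff_of_nonneg fun j _ => sq_nonneg _] at hsq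
  simpa using hsq i hi

variable {e : ι → E →L[𝕜] E} (he : ∀ i, IsStarProjection (e i))
  (horth : Pairwise fun i j => e i * e j = 0)
include he horth

theorem norm_sum_apply_sq_of_pairwise_mul_eq_zero (s : Finset ι) (x : E) :
    ‖(∑ i ∈ s, e i) x‖ ^ 2 = ∑ i ∈ s, ‖e i x‖ ^ 2 := by
  rw [(isStarProjection_sum_of_pairwise_mul_eq_zero he horth s).norm_apply_sq,
    re_inner_sum_apply_self fun i _ => he i]

theorem summable_apply_of_pairwise_mul_eq_zero (x : E) : Summable fun i => e i x := by
  have hsq : Summable fun i => ‖e i x‖ ^ 2 := by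
    refine summable_of_sum_le (c := ‖x‖ ^ 2) (fun i => sq_nonneg _) fun s => ?_
    rw [← norm_sum_apply_sq_of_pairwise_mul_eq_zero he horth]
    gcongr
    exact (isStarProjection_sum_of_pairwise_mul_eq_zero he horth s).norm_apply_le x
  refine summable_iff_vanishing_norm.mpr fun ε hε => ?_
  obtain ⟨s, hs⟩ := summable_iff_vanishing_norm.mp hsq (ε ^ 2) (by positivity)
  refine ⟨s, fun t ht => ?_⟩
  have hst := hs t ht
  rw [Real.norm_of_nonneg (Finset.sum_nonneg fun i _ => sq_nonneg _),
    ← norm_sum_apply_sq_of_pairwise_mul_eq_zero he horth, sum_apply] at hst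
  exact lt_of_pow_lt_pow_left₀ 2 hε.le hst

theorem exists_isStarProjection_hasSum_apply_of_pairwise_mul_eq_zero :
    ∃ P : E →L[𝕜] E, IsStarProjection P ∧ ∀ x, HasSum (fun i => e i x) (P x) := by
  classical
  have hsum := summable_apply_of_pairwise_mul_eq_zero he horth
  let L : E →ₗ[𝕜] E :=
    { toFun x := ∑' i, e i x
      map_add' x y := by simp only [map_add]; exact (hsum x).tsum_add (hsum y)
      map_smul' c x := by simp only [map_smul]; exact (hsum x).tsum_const_smul c }
  have hL : ∀ x, ‖L x‖ ≤ 1 * ‖x‖ := fun x => by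
    rw [one_mul]
    refine le_of_tendsto' ((continuous_norm.tendsto _).comp (hsum x).hasSum) fun s => ?_
    simpa only [Function.comp_apply, ← sum_apply] using
      (isStarProjection_sum_of_pairwise_mul_eq_zero he horth s).norm_apply_le x
  let P := L.mkContinuous 1 hL
  have hP : ∀ x, HasSum (fun i => e i x) (P x) := fun x => (hsum x).hasSum
  refine ⟨P, ⟨?_, ?_⟩, hP⟩
  · have hcomp : ∀ i x, e i (P x) = e i x := fun i x => by
      refine ((hP x).mapL (e i)).unique ?_
      convert hasSum_ite_eq i (e i x) with j
      split_ifs with hji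
      · rw [hji, ← mul_apply_eq_comp, (he i).isIdempotentElem.eq]
      · rw [← mul_apply_eq_comp, horth (Ne.symm hji), zero_apply]
    ext x
    exact (hP (P x)).unique (by simpa only [hcomp] using hP x)
  · rw [isSelfAdjoint_iff_isSymmetric]
    intro x y
    have he_symm : ∀ i, ⟪e i x, y⟫_𝕜 = ⟪x, e i y⟫_𝕜 := fun i =>
      (he i).isSelfAdjoint.isSymmetric x y
    refine ((hP x).mapL (innerSLFlip 𝕜 y)).unique ?_
    simpa only [innerSLFlip_apply_apply, innerSL_apply_apply, coe_coe, he_symm]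
      using (hP y).mapL (innerSL 𝕜 x)

end StrongSum

theorem exists_sum_add_sum_of_hasSum_sum_apply {𝕜 E ι : Type*} [RCLike 𝕜] [NormedAddCommGroup E]
    [InnerProductSpace 𝕜 E] [CompleteSpace E] [Fintype ι] {q : ℕ → ι → E →L[𝕜] E}
    (hq : ∀ j k, IsStarProjection (q j k))
    (horth : ∀ i j : ℕ, 1 < ((i : ℤ) - j).natAbs → ∀ k, q i k * q j k = 0)
    {B : E →L[𝕜] E} (hB : ∀ x, HasSum (fun j => ∑ k, q j k x) (B x)) :
    ∃ P Q : ι → E →L[𝕜] E, (∀ k, IsStarProjection (P k)) ∧ (∀ k, IsStarProjection (Q k)) ∧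
      B = ∑ k, P k + ∑ k, Q k := by
  have hP k : ∃ P : E →L[𝕜] E, IsStarProjection P ∧ ∀ x, HasSum (fun m => q (2 * m) k x) (P x) :=
    exists_isStarProjection_hasSum_apply_of_pairwise_mul_eq_zero (fun m => hq _ k)
      fun m m' hmm' => horth _ _ (by omega) k
  have hQ k : ∃ Q : E →L[𝕜] E, IsStarProjection Q ∧
      ∀ x, HasSum (fun m => q (2 * m + 1) k x) (Q x) :=
    exists_isStarProjection_hasSum_apply_of_pairwise_mul_eq_zero (fun m => hq _ k)
      fun m m' hmm' => horth _ _ (by omega) k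
  choose P hP hPsum using hP
  choose Q hQ hQsum using hQ
  refine ⟨P, Q, hP, hQ, ?_⟩
  ext x
  refine (hB x).unique ?_
  rw [add_apply, sum_apply, sum_apply, ← Finset.sum_add_distrib]
  exact hasSum_sum fun k _ => (hPsum k x).even_add_odd (hQsum k x)

theorem exists_fin_sum_eq_add_of_le {M : Type*} [AddCommMonoid M] {P : M → Prop} (h0 : P 0)
    {m m' n : ℕ} (h : m + m' ≤ n) {p : Fin m → M} {q : Fin m' → M} (hp : ∀ k, P (p k))
    (hq : ∀ k, P (q k)) : ∃ r : Fin n → M, (∀ k, P (r k)) ∧ ∑ k, r k = ∑ k, p k + ∑ k, q k := by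
  obtain ⟨d, rfl⟩ := Nat.exists_eq_add_of_le h
  refine ⟨Fin.append (Fin.append p q) 0, fun k => ?_, by simp [Fin.sum_univ_add]⟩
  refine Fin.addCases (fun k => Fin.addCases (fun k => ?_) (fun k => ?_) k) (fun k => ?_) k <;>
    simp [hp, hq, h0]

section RangeProjection

theorem rangeProjection_mul_self (a : H →L[ℂ] H) : rangeProjection a * a = a := by
  ext x
  exact Submodule.starProjection_eq_self_iff.mpr
    (Submodule.le_topologicalClosure _ (LinearMap.mem_range_self (a : H →ₗ[ℂ] H) x))

theorem isSelfAdjoint_rangeProjection (a : H →L[ℂ] H) : IsSelfAdjoint (rangeProjection a) :=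
  have := (Submodule.isClosed_topologicalClosure
    (LinearMap.range (a : H →ₗ[ℂ] H))).completeSpace_coe
  isSelfAdjoint_starProjection _

theorem IsSelfAdjoint.mul_rangeProjection {a : H →L[ℂ] H} (ha : IsSelfAdjoint a) :
    a * rangeProjection a = a := by
  simpa only [star_mul, (isSelfAdjoint_rangeProjection a).star_eq, ha.star_eq]
    using congrArg star (rangeProjection_mul_self a)

variable {ι : Type*} [Fintype ι] {q : ι → H →L[ℂ] H} (hq : ∀ i, IsStarProjection (q i))
include hq

theorem mul_rangeProjection_sum_eq_self (i : ι) :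
    q i * rangeProjection (∑ j, q j) = q i := by
  have hsa : IsSelfAdjoint (∑ j, q j) := isSelfAdjoint_sum _ fun j _ => (hq j).isSelfAdjoint
  ext x
  have hker : (∑ j, q j) (x - rangeProjection (∑ j, q j) x) = 0 := by
    rw [map_sub, ← mul_apply_eq_comp, hsa.mul_rangeProjection, sub_self]
  have := apply_eq_zero_of_sum_apply_eq_zero (fun j _ => hq j) hker (Finset.mem_univ i)
  rwa [map_sub, sub_eq_zero, eq_comm] at this

theorem rangeProjection_sum_mul_eq_self (i : ι) :
    rangeProjection (∑ j, q j) * q i = q i := by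
  simpa only [star_mul, (isSelfAdjoint_rangeProjection _).star_eq, (hq i).isSelfAdjoint.star_eq]
    using congrArg star (mul_rangeProjection_sum_eq_self hq i)

theorem mul_eq_zero_of_rangeProjection_sum_mul_eq_zero {κ : Type*} [Fintype κ]
    {p : κ → H →L[ℂ] H} (hp : ∀ k, IsStarProjection (p k))
    (h : rangeProjection (∑ k, p k) * rangeProjection (∑ j, q j) = 0) (k : κ) (i : ι) :
    p k * q i = 0 :=
  calc p k * q i = p k * rangeProjection (∑ k, p k) * (rangeProjection (∑ j, q j) * q i) := by
        rw [mul_rangeProjection_sum_eq_self hp, rangeProjection_sum_mul_eq_self hq]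
    _ = 0 := by rw [mul_assoc, ← mul_assoc (rangeProjection _), h, zero_mul, mul_zero]

end RangeProjection

theorem isProjOp_iff_isStarProjection {p : H →L[ℂ] H} : IsProjOp p ↔ IsStarProjection p :=
  ⟨fun h => ⟨h.2, h.1⟩, fun h => ⟨h.2, h.1.eq⟩⟩

theorem stmt3_general (N : ℕ) (b : ℕ → H →L[ℂ] H) (B : H →L[ℂ] H)
    (horth : ∀ i j : ℕ, 1 < ((i : ℤ) - j).natAbs →
      rangeProjection (b i) * rangeProjection (b j) = 0)
    (hNj : ∀ j, ∃ m : ℕ, m ≤ N ∧ ∃ p : Fin m → H →L[ℂ] H,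
      (∀ k, IsProjOp (p k)) ∧ b j = ∑ k, p k)
    (hconv : ∀ x : H, HasSum (fun j => b j x) (B x)) :
    ∃ p : Fin (2 * N) → H →L[ℂ] H, (∀ k, IsProjOp (p k)) ∧ B = ∑ k, p k := by
  have hq j : ∃ q : Fin N → H →L[ℂ] H, (∀ k, IsStarProjection (q k)) ∧ b j = ∑ k, q k := by
    obtain ⟨m, hmN, p, hp, hbp⟩ := hNj j
    obtain ⟨q, hq, hsum⟩ := exists_fin_sum_eq_add_of_le (IsStarProjection.zero _)
      (m' := 0) (by simpa using hmN) (fun k => isProjOp_iff_isStarProjection.mp (hp k))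
      (fun _ => IsStarProjection.zero _)
    exact ⟨q, hq, by simpa [hsum] using hbp⟩
  choose q hq hbq using hq
  have hqq (i j : ℕ) (hij : 1 < ((i : ℤ) - j).natAbs) k : q i k * q j k = 0 :=
    mul_eq_zero_of_rangeProjection_sum_mul_eq_zero (hq j) (hq i)
      (by simpa only [hbq] using horth i j hij) k k
  obtain ⟨P, Q, hP, hQ, hB⟩ := exists_sum_add_sum_of_hasSum_sum_apply hq hqq
    (by simpa only [hbq, sum_apply] using hconv)
  obtain ⟨p, hp, hsum⟩ := exists_fin_sum_eq_add_of_le (IsStarProjection.zero _) (two_mul N).ge hP hQ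
  exact ⟨p, fun k => isProjOp_iff_isStarProjection.mpr (hp k), hB.trans hsum.symm⟩

/-- If positive operators `b j` have range projections orthogonal whenever `|i - j| > 1`,
each `b j` is a sum of at most `N` projections, and `∑ b j` converges strongly to `B`,
then `B` is a sum of `2 * N` projections. -/
theorem stmt3 (N : ℕ) (b : ℕ → H →L[ℂ] H) (B : H →L[ℂ] H)
    (hpos : ∀ j, (b j).IsPositive)
    (horth : ∀ i j : ℕ, 1 < ((i : ℤ) - j).natAbs →
      rangeProjection (b i) * rangeProjection (b j) = 0)
    (hNj : ∀ j, ∃ m : ℕ, m ≤ N ∧ ∃ p : Fin m → H →L[ℂ] H,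
      (∀ k, IsProjOp (p k)) ∧ b j = ∑ k, p k)
    (hconv : ∀ x : H, HasSum (fun j => b j x) (B x)) :
    ∃ p : Fin (2 * N) → H →L[ℂ] H, (∀ k, IsProjOp (p k)) ∧ B = ∑ k, p k :=
  stmt3_general N b B horth hNj hconv
end

section
/- Let a ∈ B(H)^+ be a finite positive combination a = Σ_{j=1}^n λ_j p_j with λ_j > 0 and projections p_j, and let δ = min_j λ_j. Then for every j, χ_a(0, δ) ≼ R_a − p_j and p_j ≼ χ_a[δ, ∞). -/
open scoped InnerProductSpace
open ContinuousLinearMap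

variable {H : Type*} [NormedAddCommGroup H] [InnerProductSpace ℂ H] [CompleteSpace H]

/-!
If `range p ∩ ker q = 0`, then `p ≼ q`: the partial isometry `v` of the polar decomposition of
`c = q p` has initial projection the projection onto `(ker c)ᗮ = (ker p)ᗮ = range p`, and its
range lies in `closure (range c) ⊆ range q`, so `v v* ≤ q`.

For the theorem, the quadratic form of `a` is `⟪x, a x⟫ = ∑ λ_k ‖p_k x‖²`. It is at least
`δ ‖x‖²` on the range of `p_j`, but below `δ ‖x‖²` on nonzero vectors of the range of `e`, so
these two ranges meet only in `0`. The same formula shows `ker a ⊆ ker p_j`, i.e. `p_j ≤ R_a`;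
as also `e ≤ e + f = R_a`, this turns into `range e ∩ ker (R_a - p_j) = 0` and
`range p_j ∩ ker f = 0`.
-/

theorem IsProjOp.isStarProjection {p : H →L[ℂ] H} (hp : IsProjOp p) : IsStarProjection p :=
  ⟨hp.2, hp.1⟩

theorem isStarProjection_rangeProjection (b : H →L[ℂ] H) :
    IsStarProjection (rangeProjection b) :=
  isStarProjection_starProjection

theorem rangeProjection_mul_eq_self {b q : H →L[ℂ] H}
    (h : q.range ≤ b.range.topologicalClosure) : rangeProjection b * q = q := by
  ext x
  exact Submodule.starProjection_eq_self_iff.mpr (h ⟨x, rfl⟩)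

theorem IsIdempotentElem.mem_range_iff_apply_eq {R M : Type*} [Ring R] [TopologicalSpace M]
    [AddCommGroup M] [Module R M] {p : M →L[R] M} (hp : IsIdempotentElem p) {x : M} :
    x ∈ p.range ↔ p x = x :=
  LinearMap.IsIdempotentElem.mem_range_iff hp.toLinearMap

theorem IsStarProjection.mul_star_self_of_star_mul_self {A : Type*} [NonUnitalNormedRing A]
    [StarRing A] [CStarRing A] {v : A} (h : IsStarProjection (star v * v)) :
    IsStarProjection (v * star v) := by
  have hv : v * (star v * v) = v := by
    have hp : star v * v * star v * v = star v * v := by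
      rw [mul_assoc (star v * v)]
      exact h.isIdempotentElem.eq
    rw [← sub_eq_zero, ← CStarRing.star_mul_self_eq_zero_iff]
    simp only [star_sub, star_mul, star_star, sub_mul, mul_sub, ← mul_assoc, hp, sub_self,
      zero_mul]
  refine ⟨?_, .mul_star_self v⟩
  show v * star v * (v * star v) = v * star v
  rw [mul_assoc, ← mul_assoc (star v), ← mul_assoc, hv]

theorem IsStarProjection.orthogonal_ker {𝕜 E : Type*} [RCLike 𝕜] [NormedAddCommGroup E]
    [InnerProductSpace 𝕜 E] [CompleteSpace E] {p : E →L[𝕜] E} (hp : IsStarProjection p) :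
    p.kerᗮ = p.range := by
  obtain ⟨K, _, rfl⟩ := isStarProjection_iff_eq_starProjection.mp hp
  rw [Submodule.ker_starProjection, Submodule.range_starProjection,
    Submodule.orthogonal_orthogonal]

theorem IsStarProjection.re_inner_apply_self {𝕜 E : Type*} [RCLike 𝕜] [NormedAddCommGroup E]
    [InnerProductSpace 𝕜 E] [CompleteSpace E] {p : E →L[𝕜] E} (hp : IsStarProjection p)
    (x : E) : RCLike.re ⟪x, p x⟫_𝕜 = ‖p x‖ ^ 2 := by
  rw [apply_norm_sq_eq_inner_adjoint_right, ← star_eq_adjoint, hp.isSelfAdjoint.star_eq]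
  congr 3
  exact hp.isIdempotentElem.eq.symm

theorem exists_adjoint_comp_self_eq_starProjection_of_norm_eq {𝕜 E F G : Type*} [RCLike 𝕜]
    [NormedAddCommGroup E] [NormedSpace 𝕜 E]
    [NormedAddCommGroup F] [InnerProductSpace 𝕜 F] [CompleteSpace F]
    [NormedAddCommGroup G] [InnerProductSpace 𝕜 G] [CompleteSpace G]
    (s : E →L[𝕜] F) (c : E →L[𝕜] G) (h : ∀ x, ‖s x‖ = ‖c x‖) :
    ∃ v : F →L[𝕜] G, adjoint v ∘L v = s.range.topologicalClosure.starProjection ∧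
      v.range ≤ c.range.topologicalClosure := by
  set M := s.range.topologicalClosure
  let e : E →L[𝕜] M := s.codRestrict M fun x ↦ s.range.le_topologicalClosure ⟨x, rfl⟩
  have he : DenseRange e := by
    rw [DenseRange, Subtype.dense_iff, ← Set.range_comp]
    exact s.range.topologicalClosure_coe.subset
  -- `ψ` is `c ∘ s⁻¹` on the range of `s`, extended by continuity to its closure `M`
  let ψ : M →L[𝕜] G := (c : E →ₗ[𝕜] G).extendOfNorm (e : E →ₗ[𝕜] M)
  have hψe (x : E) : ψ (e x) = c x :=
    LinearMap.extendOfNorm_eq he ⟨1, fun x ↦ by simp [e, h]⟩ x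
  have hψ_norm (m : M) : ‖ψ m‖ = ‖m‖ := by
    refine he.induction_on m (isClosed_eq (by fun_prop) (by fun_prop)) fun x ↦ ?_
    rw [hψe]
    exact (h x).symm
  have hψ_mem (m : M) : ψ m ∈ c.range.topologicalClosure := by
    refine he.induction_on m ?_ fun x ↦ ?_
    · exact c.range.isClosed_topologicalClosure.preimage ψ.continuous
    · rw [hψe]
      exact c.range.le_topologicalClosure ⟨x, rfl⟩
  refine ⟨ψ ∘L M.orthogonalProjectionOnto, ?_, ?_⟩
  · rw [adjoint_comp, Submodule.adjoint_orthogonalProjectionOnto, comp_assoc,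
      ← comp_assoc _ ψ, (norm_map_iff_adjoint_comp_self ψ).mp hψ_norm, one_def, id_comp]
    rfl
  · rintro _ ⟨x, rfl⟩
    exact hψ_mem _

theorem exists_adjoint_comp_self_eq_starProjection_orthogonal_ker {E F : Type*}
    [NormedAddCommGroup E] [InnerProductSpace ℂ E] [CompleteSpace E]
    [NormedAddCommGroup F] [InnerProductSpace ℂ F] [CompleteSpace F] (c : E →L[ℂ] F) :
    ∃ v : E →L[ℂ] F, adjoint v ∘L v = c.kerᗮ.starProjection ∧
      v.range ≤ c.range.topologicalClosure := by
  set s := CFC.sqrt (adjoint c ∘L c)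
  have hs : adjoint s = s :=
    (star_eq_adjoint s).symm.trans (IsSelfAdjoint.of_nonneg (CFC.sqrt_nonneg _)).star_eq
  have hss : adjoint s ∘L s = adjoint c ∘L c := by
    rw [hs]
    exact CFC.sqrt_mul_sqrt_self _ ((nonneg_iff_isPositive _).mpr c.isPositive_adjoint_comp_self)
  have hnorm (x : E) : ‖s x‖ = ‖c x‖ := by
    rw [← sq_eq_sq₀ (norm_nonneg _) (norm_nonneg _), apply_norm_sq_eq_inner_adjoint_right,
      apply_norm_sq_eq_inner_adjoint_right, hss]
  have hker : s.ker = c.ker := by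
    ext x
    rw [LinearMap.mem_ker, LinearMap.mem_ker, coe_coe, coe_coe, ← norm_eq_zero, hnorm,
      norm_eq_zero]
  obtain ⟨v, hv, hrange⟩ := exists_adjoint_comp_self_eq_starProjection_of_norm_eq s c hnorm
  refine ⟨v, ?_, hrange⟩
  rw [hv]
  congr 1
  rw [← hker, orthogonal_ker, hs]

theorem mvnSubequiv_of_disjoint_range_ker {p q : H →L[ℂ] H} (hp : IsStarProjection p)
    (hq : IsStarProjection q) (hpq : Disjoint p.range q.ker) : MvNSubequiv p q := by
  obtain ⟨v, hv, hrange⟩ := exists_adjoint_comp_self_eq_starProjection_orthogonal_ker (q * p)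
  have hker : (q * p).ker = p.ker := by
    refine le_antisymm (fun x hx ↦ ?_) (fun x hx ↦ ?_)
    · exact Submodule.disjoint_def.mp hpq (p x) ⟨x, rfl⟩ hx
    · simp_all
  have hvv : adjoint v * v = p := by
    rw [mul_def, hv, IsStarProjection.ext_iff isStarProjection_starProjection hp,
      Submodule.range_starProjection, hker, hp.orthogonal_ker]
  have hqv : q * v = v := by
    ext x
    refine hq.isIdempotentElem.mem_range_iff_apply_eq.mp ?_
    exact Submodule.topologicalClosure_minimal _ (LinearMap.range_comp_le_range _ _)
      hq.isIdempotentElem.isClosed_range (hrange (LinearMap.mem_range_self _ x))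
  refine ⟨v, hvv, IsStarProjection.le_of_mul_eq_right ?_ hq ?_⟩
  · rw [← star_eq_adjoint]
    exact .mul_star_self_of_star_mul_self (by rwa [star_eq_adjoint, hvv])
  · rw [← mul_assoc, hqv]

section Disjoint

variable {R M : Type*} [Ring R] [TopologicalSpace M] [AddCommGroup M] [IsTopologicalAddGroup M]
  [Module R M] {e f p r : M →L[R] M}

theorem disjoint_range_ker_sub (hre : r * e = e) (hep : Disjoint e.range p.range) :
    Disjoint e.range (r - p).ker := by
  rw [Submodule.disjoint_def] at hep ⊢
  rintro _ ⟨x, rfl⟩ hx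
  have hrx : r (e x) = e x := congr($hre x)
  have hpx : (r - p) (e x) = 0 := hx
  rw [sub_apply, hrx, sub_eq_zero] at hpx
  exact hep _ ⟨x, rfl⟩ ⟨e x, hpx.symm⟩

theorem disjoint_range_ker_of_add_eq (hef : e + f = r) (hrp : r * p = p)
    (hep : Disjoint e.range p.range) : Disjoint p.range f.ker := by
  rw [Submodule.disjoint_def] at hep ⊢
  rintro _ ⟨x, rfl⟩ hx
  have hfx : f (p x) = 0 := hx
  have hex : e (p x) = p x := by
    have hrx : (e + f) (p x) = p x := hef ▸ congr($hrp x)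
    rwa [add_apply, hfx, add_zero] at hrx
  exact hep _ ⟨p x, hex⟩ ⟨x, rfl⟩

end Disjoint

section PositiveCombination

variable {ι : Type*} [Fintype ι] {lam : ι → ℝ} {p : ι → H →L[ℂ] H} {a : H →L[ℂ] H}

theorem re_inner_apply_self_eq_sum (hp : ∀ j, IsStarProjection (p j))
    (hsum : a = ∑ j, (lam j : ℂ) • p j) (x : H) :
    RCLike.re ⟪x, a x⟫_ℂ = ∑ j, lam j * ‖p j x‖ ^ 2 := by
  simp only [hsum, sum_apply, smul_apply, inner_sum, inner_smul_right, map_sum]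
  refine Finset.sum_congr rfl fun k _ ↦ ?_
  rw [← (hp k).re_inner_apply_self]
  exact Complex.re_ofReal_mul _ _

theorem mul_norm_sq_le_re_inner_apply_self (hlam : ∀ j, 0 ≤ lam j)
    (hp : ∀ j, IsStarProjection (p j)) (hsum : a = ∑ j, (lam j : ℂ) • p j) (j : ι) (x : H) :
    lam j * ‖p j x‖ ^ 2 ≤ RCLike.re ⟪x, a x⟫_ℂ := by
  rw [re_inner_apply_self_eq_sum hp hsum]
  exact Finset.single_le_sum (f := fun k ↦ lam k * ‖p k x‖ ^ 2)
    (fun k _ ↦ mul_nonneg (hlam k) (sq_nonneg _)) (Finset.mem_univ j)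

theorem range_le_closure_range_of_eq_sum (hlam : ∀ j, 0 < lam j)
    (hp : ∀ j, IsStarProjection (p j)) (hsum : a = ∑ j, (lam j : ℂ) • p j) (j : ι) :
    (p j).range ≤ a.range.topologicalClosure := by
  have ha : adjoint a = a := by
    rw [← star_eq_adjoint, hsum]
    exact isSelfAdjoint_sum _ fun k _ ↦ .smul (Complex.conj_ofReal _) (hp k).isSelfAdjoint
  have hker : a.ker ≤ (p j).ker := fun x hx ↦ by
    have hle := mul_norm_sq_le_re_inner_apply_self (fun k ↦ (hlam k).le) hp hsum j x
    have hax : a x = 0 := hx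
    rw [hax, inner_zero_right, map_zero] at hle
    have hpx : ‖p j x‖ ^ 2 = 0 :=
      le_antisymm (nonpos_of_mul_nonpos_right hle (hlam j)) (sq_nonneg _)
    simpa using hpx
  rw [← (hp j).orthogonal_ker, ← ha, ← orthogonal_ker]
  exact Submodule.orthogonal_le (ha ▸ hker)

end PositiveCombination

/-- `e` and `f` stand for the spectral projections `χ_a(0, δ)` and `χ_a[δ, ∞)`. -/
theorem stmt5_general (a : H →L[ℂ] H) (n : ℕ) (lam : Fin n → ℝ) (p : Fin n → H →L[ℂ] H)
    (hlam : ∀ j, 0 < lam j) (hp : ∀ j, IsProjOp (p j))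
    (hsum : a = ∑ j, ((lam j : ℂ)) • p j)
    (δ : ℝ) (hδ : IsLeast (Set.range lam) δ)
    (e f : H →L[ℂ] H) (he : IsProjOp e) (hf : IsProjOp f)
    (hef : e + f = rangeProjection a)
    (hestrict : ∀ x : H, e x = x → x ≠ 0 → RCLike.re ⟪x, a x⟫_ℂ < δ * ‖x‖ ^ 2) :
    ∀ j, MvNSubequiv e (rangeProjection a - p j) ∧ MvNSubequiv (p j) f := by
  intro j
  have hps k := (hp k).isStarProjection
  have hR := isStarProjection_rangeProjection a
  have hRe : rangeProjection a * e = e :=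
    (he.isStarProjection.le_iff_mul_eq_right hR).mp
      ((he.isStarProjection.le_iff_sub hR).mpr (eq_sub_of_add_eq' hef ▸ hf.isStarProjection))
  have hRp : rangeProjection a * p j = p j :=
    rangeProjection_mul_eq_self (range_le_closure_range_of_eq_sum hlam hps hsum j)
  have hep : Disjoint e.range (p j).range := by
    refine Submodule.disjoint_def.mpr fun x hxe hxp ↦ by_contra fun hx ↦ ?_
    rw [he.isStarProjection.isIdempotentElem.mem_range_iff_apply_eq] at hxe
    rw [(hps j).isIdempotentElem.mem_range_iff_apply_eq] at hxp
    refine (hestrict x hxe hx).not_ge ?_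
    calc δ * ‖x‖ ^ 2 ≤ lam j * ‖p j x‖ ^ 2 := by
          rw [hxp]
          gcongr
          exact hδ.2 ⟨j, rfl⟩
      _ ≤ RCLike.re ⟪x, a x⟫_ℂ :=
          mul_norm_sq_le_re_inner_apply_self (fun k ↦ (hlam k).le) hps hsum j x
  exact ⟨mvnSubequiv_of_disjoint_range_ker he.isStarProjection
      ((hps j).sub_of_mul_eq_right hR hRp) (disjoint_range_ker_sub hRe hep),
    mvnSubequiv_of_disjoint_range_ker (hps j) hf.isStarProjection
      (disjoint_range_ker_of_add_eq hef hRp hep)⟩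

/-- If `a = ∑ λ_j p_j` with `λ_j > 0` and `δ = min λ_j`, then for every `j`,
`χ_a(0, δ) ≼ R_a − p_j` and `p_j ≼ χ_a[δ, ∞)`.  Here `e` plays the role of `χ_a(0,δ)`
and `f` that of `χ_a[δ,∞)`. -/
theorem stmt5 (a : H →L[ℂ] H) (n : ℕ) (lam : Fin n → ℝ) (p : Fin n → H →L[ℂ] H)
    (hlam : ∀ j, 0 < lam j) (hp : ∀ j, IsProjOp (p j))
    (hsum : a = ∑ j, ((lam j : ℂ)) • p j)
    (δ : ℝ) (hδ : IsLeast (Set.range lam) δ)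
    (e f : H →L[ℂ] H) (he : IsProjOp e) (hf : IsProjOp f)
    (hef : e + f = rangeProjection a)
    (hcf : a * f = f * a)
    (hflam : (δ : ℂ) • f ≤ a * f)
    (hestrict : ∀ x : H, e x = x → x ≠ 0 → RCLike.re ⟪x, a x⟫_ℂ < δ * ‖x‖ ^ 2) :
    ∀ j, MvNSubequiv e (rangeProjection a - p j) ∧ MvNSubequiv (p j) f :=
  stmt5_general a n lam p hlam hp hsum δ hδ e f he hf hef hestrict
end

section
/- Let a ∈ B(H)^+ with a = Σ_{j=1}^n p_j a sum of n nonzero projections, and suppose there exist mutually orthogonal nonzero projections q_1,…,q_n with Σ q_j = I and p_j equivalent to q_j for each j. Then there exists an isometry-like partial isometry v with v*v = R_a and q_j v a v* q_j = q_j for all j. -/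
open scoped InnerProductSpace
open ContinuousLinearMap

variable {H : Type*} [NormedAddCommGroup H] [InnerProductSpace ℂ H] [CompleteSpace H]

/-!
Choose partial isometries `V j` with `V j⋆ V j = p j` and `V j V j⋆ = q j`, and put
`w = ∑ V j`. Since the `q j` are orthogonal, the cross terms `V i⋆ V j` vanish, so
`w⋆ w = ∑ p j = a`, and `q j w = V j`, so `q j (w w⋆) q j = q j`. The polar decomposition
`w = v |w|` then gives a partial isometry `v` with `v⋆ v = R_|w| = R_a` and
`v a v⋆ = (v |w|)(v |w|)⋆ = w w⋆`.
-/

section CStarRing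

variable {A : Type*} [NonUnitalNormedRing A] [StarRing A] [CStarRing A]

theorem mul_star_mul_self_of_isIdempotentElem {a : A} (h : IsIdempotentElem (a * star a)) :
    a * star a * a = a := by
  have hz : (a * star a * a - a) * star (a * star a * a - a) = 0 :=
    calc (a * star a * a - a) * star (a * star a * a - a)
        = a * star a * (a * star a) * (a * star a) - a * star a * (a * star a)
          - a * star a * (a * star a) + a * star a := by
          simp only [star_sub, star_mul, star_star]; noncomm_ring
      _ = 0 := by rw [h.eq, h.eq]; abel
  exact sub_eq_zero.mp ((CStarRing.mul_star_self_eq_zero_iff _).mp hz)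

theorem mul_eq_self_of_mul_star_eq {v q : A} (hv : v * star v = q) (hq : IsIdempotentElem q) :
    q * v = v := by
  subst hv
  exact mul_star_mul_self_of_isIdempotentElem hq

variable {ι : Type*} [Fintype ι] {V q : ι → A}

theorem star_sum_mul_sum_of_orthogonal (hV : ∀ j, V j * star (V j) = q j)
    (hq : ∀ j, IsIdempotentElem (q j)) (horth : ∀ i j, i ≠ j → q i * q j = 0) :
    star (∑ j, V j) * ∑ j, V j = ∑ j, star (V j) * V j := by
  classical
  have hcross : ∀ i j, i ≠ j → star (V i) * V j = 0 := fun i j hij => by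
    rw [← mul_eq_self_of_mul_star_eq (hV i) (hq i), ← mul_eq_self_of_mul_star_eq (hV j) (hq j),
      star_mul, ← hV i, star_mul, star_star, hV i, mul_assoc, ← mul_assoc (q i), horth i j hij,
      zero_mul, mul_zero]
  rw [star_sum, Finset.sum_mul_sum]
  exact Finset.sum_congr rfl fun i _ =>
    Finset.sum_eq_single i (fun j _ hj => hcross i j hj.symm) (by simp)

theorem mul_sum_mul_star_sum_mul_of_orthogonal (hV : ∀ j, V j * star (V j) = q j)
    (hq : ∀ j, IsIdempotentElem (q j)) (horth : ∀ i j, i ≠ j → q i * q j = 0) (j : ι) :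
    q j * ((∑ i, V i) * star (∑ i, V i)) * q j = q j := by
  classical
  have hqV : q j * ∑ i, V i = V j := by
    rw [Finset.mul_sum, Finset.sum_eq_single j (fun i _ hi => ?_) (by simp)]
    · exact mul_eq_self_of_mul_star_eq (hV j) (hq j)
    · rw [← mul_eq_self_of_mul_star_eq (hV i) (hq i), ← mul_assoc, horth j i hi.symm, zero_mul]
  have hq_star : star (q j) = q j := by rw [← hV j, star_mul, star_star]
  calc q j * ((∑ i, V i) * star (∑ i, V i)) * q j
      = (q j * ∑ i, V i) * star (q j * ∑ i, V i) := by rw [star_mul, hq_star]; noncomm_ring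
    _ = q j := by rw [hqV, hV j]

end CStarRing

theorem rangeProjection_eq_of_ker_adjoint_eq {b c : H →L[ℂ] H}
    (h : LinearMap.ker (adjoint b : H →ₗ[ℂ] H) = LinearMap.ker (adjoint c : H →ₗ[ℂ] H)) :
    rangeProjection b = rangeProjection c := by
  have hb := (adjoint b).orthogonal_ker
  have hc := (adjoint c).orthogonal_ker
  rw [adjoint_adjoint] at hb hc
  have hK : (LinearMap.range (b : H →ₗ[ℂ] H)).topologicalClosure =
      (LinearMap.range (c : H →ₗ[ℂ] H)).topologicalClosure := by
    rw [← hb, ← hc, h]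
  change Submodule.starProjection _ = Submodule.starProjection _
  congr 1

theorem rangeProjection_abs (w : H →L[ℂ] H) :
    rangeProjection (CFC.abs w) = rangeProjection (star w * w) := by
  apply rangeProjection_eq_of_ker_adjoint_eq
  have habs : adjoint (CFC.abs w) = CFC.abs w := (CFC.abs_nonneg w).isSelfAdjoint.adjoint_eq
  have hww : adjoint (star w * w) = adjoint (CFC.abs w) ∘L CFC.abs w := by
    rw [← star_eq_adjoint, star_mul, star_star, ← CFC.abs_mul_abs, habs]; rfl
  rw [hww, ker_adjoint_comp_self, habs]

theorem norm_abs_apply (w : H →L[ℂ] H) (x : H) : ‖CFC.abs w x‖ = ‖w x‖ := by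
  have habs : adjoint (CFC.abs w) = CFC.abs w := (CFC.abs_nonneg w).isSelfAdjoint.adjoint_eq
  have h : adjoint (CFC.abs w) ∘L CFC.abs w = adjoint w ∘L w := by
    rw [habs, ← star_eq_adjoint w]; exact CFC.abs_mul_abs w
  rw [← sq_eq_sq₀ (norm_nonneg _) (norm_nonneg _), apply_norm_sq_eq_inner_adjoint_right,
    apply_norm_sq_eq_inner_adjoint_right, h]

theorem adjoint_comp_self_of_isometry_comp_orthogonalProjectionOnto
    {𝕜 E F : Type*} [RCLike 𝕜] [NormedAddCommGroup E] [InnerProductSpace 𝕜 E] [CompleteSpace E]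
    [NormedAddCommGroup F] [InnerProductSpace 𝕜 F] [CompleteSpace F]
    (K : Submodule 𝕜 E) [CompleteSpace K] (u : K →L[𝕜] F) (hu : ∀ y, ‖u y‖ = ‖y‖) :
    adjoint (u ∘L K.orthogonalProjectionOnto) ∘L (u ∘L K.orthogonalProjectionOnto) =
      K.starProjection := by
  rw [adjoint_comp, comp_assoc, ← comp_assoc _ u, (norm_map_iff_adjoint_comp_self u).mp hu,
    one_def, id_comp, K.adjoint_orthogonalProjectionOnto]
  rfl

/-- `t x ↦ w x` extends by continuity to an isometry on the closure of the range of `t`,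
and by `0` on its orthogonal complement. -/
theorem exists_mul_eq_of_norm_apply_eq {t w : H →L[ℂ] H} (h : ∀ x, ‖w x‖ = ‖t x‖) :
    ∃ v : H →L[ℂ] H, v * t = w ∧ adjoint v * v = rangeProjection t := by
  set K := (LinearMap.range (t : H →ₗ[ℂ] H)).topologicalClosure
  let e : H →ₗ[ℂ] K :=
    (t : H →ₗ[ℂ] H).codRestrict K fun x => Submodule.le_topologicalClosure _ ⟨x, rfl⟩
  have he : DenseRange e := by
    rw [DenseRange, Subtype.dense_iff, ← Set.range_comp]
    exact (Submodule.topologicalClosure_coe _).subset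
  let u : K →L[ℂ] H := (w : H →ₗ[ℂ] H).extendOfNorm e
  have hu : ∀ x, u (e x) = w x :=
    LinearMap.extendOfNorm_eq he ⟨1, fun x => by rw [one_mul]; exact (h x).le⟩
  have hu_norm : ∀ y, ‖u y‖ = ‖y‖ := fun y =>
    he.induction_on y (isClosed_eq u.continuous.norm continuous_norm) fun x => by
      rw [hu, h]; rfl
  refine ⟨u ∘L K.orthogonalProjectionOnto, ext fun x => ?_,
    adjoint_comp_self_of_isometry_comp_orthogonalProjectionOnto K u hu_norm⟩
  change u (K.orthogonalProjectionOnto (e x : H)) = w x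
  rw [Submodule.orthogonalProjectionOnto_mem_subspace_eq_self, hu]

/-- Polar decomposition `w = v |w|`. -/
theorem exists_partialIsometry_mul_star_mul_self_mul_adjoint (w : H →L[ℂ] H) :
    ∃ v : H →L[ℂ] H, adjoint v * v = rangeProjection (star w * w) ∧
      v * (star w * w) * adjoint v = w * adjoint w := by
  obtain ⟨v, hvt, hvv⟩ := exists_mul_eq_of_norm_apply_eq fun x => (norm_abs_apply w x).symm
  refine ⟨v, hvv.trans (rangeProjection_abs w), ?_⟩
  have habs : star (CFC.abs w) = CFC.abs w := (CFC.abs_nonneg w).isSelfAdjoint.star_eq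
  calc v * (star w * w) * adjoint v = v * CFC.abs w * star (v * CFC.abs w) := by
        rw [← CFC.abs_mul_abs, star_mul, habs, star_eq_adjoint]; noncomm_ring
    _ = w * adjoint w := by rw [hvt, star_eq_adjoint]

theorem stmt10_general (a : H →L[ℂ] H) (n : ℕ)
    (p q : Fin n → H →L[ℂ] H)
    (hq : ∀ j, IsProjOp (q j) ∧ q j ≠ 0)
    (hqorth : ∀ i j, i ≠ j → q i * q j = 0)
    (hsum : a = ∑ j, p j)
    (hequiv : ∀ j, MvNEquiv (p j) (q j)) :
    ∃ v : H →L[ℂ] H, ContinuousLinearMap.adjoint v * v = rangeProjection a ∧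
      ∀ j, q j * (v * a * ContinuousLinearMap.adjoint v) * q j = q j := by
  choose V hVp hVq using hequiv
  simp only [← star_eq_adjoint] at hVp hVq
  have hq_idem : ∀ j, IsIdempotentElem (q j) := fun j => (hq j).1.2
  have ha : a = star (∑ j, V j) * ∑ j, V j := by
    rw [star_sum_mul_sum_of_orthogonal hVq hq_idem hqorth, hsum]
    simp only [hVp]
  obtain ⟨v, hvv, hvav⟩ := exists_partialIsometry_mul_star_mul_self_mul_adjoint (∑ j, V j)
  refine ⟨v, ha ▸ hvv, fun j => ?_⟩
  rw [ha, hvav, ← star_eq_adjoint]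
  exact mul_sum_mul_star_sum_mul_of_orthogonal hVq hq_idem hqorth j

/-- If `a = ∑ p_j` is a sum of `n` nonzero projections and there are mutually orthogonal
nonzero projections `q_j` summing to `I` with `p_j ∼ q_j`, then there is a partial
isometry `v` with `v*v = R_a` and `q_j (v a v*) q_j = q_j` for all `j`. -/
theorem stmt10 (a : H →L[ℂ] H) (n : ℕ)
    (p q : Fin n → H →L[ℂ] H)
    (hp : ∀ j, IsProjOp (p j) ∧ p j ≠ 0)
    (hq : ∀ j, IsProjOp (q j) ∧ q j ≠ 0)
    (hqorth : ∀ i j, i ≠ j → q i * q j = 0)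
    (hqsum : ∑ j, q j = 1)
    (hsum : a = ∑ j, p j)
    (hequiv : ∀ j, MvNEquiv (p j) (q j)) :
    ∃ v : H →L[ℂ] H, ContinuousLinearMap.adjoint v * v = rangeProjection a ∧
      ∀ j, q j * (v * a * ContinuousLinearMap.adjoint v) * q j = q j :=
  stmt10_general a n p q hq hqorth hsum hequiv
end
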